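/- Let a = (a_j) be a tuple of m×m matrices over F, let T be an invertible m×m matrix over F, and suppose the matrices Ã_j defined by ε Ã_j = T⁻¹ a_j T − T⁻¹ (∂_j T) constitute a dlog-form with letters L_1,…,L_N and constant coefficient matrices over K. Then for every j, the ε-Laurent expansion of Tr(a_j) has vanishing coefficients in all negative orders, i.e. Tr(a_j)^{(k)} = 0 for all k < 0. -/

import Mathlib

/-! Taking traces and using Jacobi's formula, `Tr aⱼ = ε Tr Ãⱼ + ∂ⱼ(det T) / det T`. The first
term is `ε` times an `ε`-independent function. The second is a logarithmic derivative: write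
numerator and denominator of `det T` as `εⁿ h` with `h(0) ≠ 0`; since `∂ⱼ` kills `ε` and maps
`K(x)` into itself, `∂ⱼ(εⁿ h) / (εⁿ h) = ∂ⱼh / h` with `∂ⱼh` again a polynomial in `ε`, and this
quotient is a power series in `ε` because `h` is invertible there. -/

open MvPolynomial

set_option synthInstance.maxHeartbeats 1000000
set_option maxHeartbeats 1000000

noncomputable section

/-- `K(x_1,…,x_M)`, the field of rational functions in the invariants. -/
abbrev FX (K : Type*) [Field K] (M : ℕ) : Type _ :=
  FractionRing (MvPolynomial (Fin M) K)

/-- `F = K(x_1,…,x_M)(ε) ≅ K(x_1,…,x_M,ε)`, realized as rational functions in the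
regulator `ε` over `K(x_1,…,x_M)`, so that it embeds canonically in the field of formal
Laurent series in `ε` over `K(x_1,…,x_M)`. -/
abbrev FE (K : Type*) [Field K] (M : ℕ) : Type _ :=
  RatFunc (FX K M)

/-- The regulator `ε`. -/
def eps (K : Type*) [Field K] (M : ℕ) : FE K M := RatFunc.X

/-- The `n`-th coefficient of the ε-Laurent expansion of `r ∈ F`. -/
def coeffL {K : Type*} [Field K] {M : ℕ} (r : FE K M) (n : ℤ) : FX K M :=
  ((r : LaurentSeries (FX K M))).coeff n

/-- The element `(∂_j L_l)/L_l` of `F`, for a letter `L l ∈ K[x_1,…,x_M]`. -/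
def dlogTerm {K : Type*} [Field K] {M N : ℕ} (L : Fin N → MvPolynomial (Fin M) K)
    (j : Fin M) (l : Fin N) : FE K M :=
  algebraMap (MvPolynomial (Fin M) K) (FE K M) (pderiv j (L l))
    / algebraMap (MvPolynomial (Fin M) K) (FE K M) (L l)

namespace Derivation

variable {R A : Type*} [CommRing R] [CommRing A] [Algebra R A] (D : Derivation R A A)

theorem map_prod {ι : Type*} [DecidableEq ι] (s : Finset ι) (f : ι → A) :
    D (∏ i ∈ s, f i) = ∑ i ∈ s, (∏ j ∈ s.erase i, f j) * D (f i) := by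
  induction s using Finset.induction_on with
  | empty => simp
  | insert x s hx ih =>
    rw [Finset.prod_insert hx, D.leibniz, ih, Finset.sum_insert hx, Finset.erase_insert hx,
      smul_eq_mul, smul_eq_mul, Finset.mul_sum, add_comm]
    congr 1
    refine Finset.sum_congr rfl fun i hi => ?_
    rw [Finset.erase_insert_of_ne (ne_of_mem_of_not_mem hi hx).symm,
      Finset.prod_insert fun h => hx (Finset.mem_of_mem_erase h)]
    ring

variable {n : Type*} [Fintype n] [DecidableEq n]

theorem map_det_eq_sum_det_updateCol (M : Matrix n n A) :
    D M.det = ∑ k, (M.updateCol k fun i => D (M i k)).det := by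
  simp only [Matrix.det_apply', map_sum, D.leibniz, D.map_intCast, smul_eq_mul, mul_zero,
    add_zero, D.map_prod, Finset.mul_sum]
  rw [Finset.sum_comm]
  refine Finset.sum_congr rfl fun k _ => Finset.sum_congr rfl fun σ _ => ?_
  rw [← Finset.prod_erase_mul _ (fun i => M.updateCol k (fun i => D (M i k)) (σ i) i)
    (Finset.mem_univ k), Matrix.updateCol_self]
  congr 2
  refine Finset.prod_congr rfl fun i hi => ?_
  rw [Matrix.updateCol_ne (Finset.ne_of_mem_erase hi)]

theorem map_det (M : Matrix n n A) : D M.det = (M.adjugate * M.map D).trace := by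
  simp only [map_det_eq_sum_det_updateCol, ← Matrix.cramer_apply, Matrix.cramer_eq_adjugate_mulVec,
    Matrix.trace, Matrix.diag, Matrix.mul_apply, Matrix.mulVec, dotProduct, Matrix.map_apply]

end Derivation

theorem Matrix.trace_inv_mul_map_derivation {R A n : Type*} [CommRing R] [Field A] [Algebra R A]
    [Fintype n] [DecidableEq n] (D : Derivation R A A) (M : Matrix n n A) :
    (M⁻¹ * M.map D).trace = D M.det / M.det := by
  rw [Matrix.inv_def, Ring.inverse_eq_inv', Matrix.smul_mul, Matrix.trace_smul, ← D.map_det,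
    smul_eq_mul, div_eq_inv_mul]

namespace RatFunc

open Polynomial

variable {F : Type*} [Field F]

theorem coe_algebraMap_polynomial (p : F[X]) :
    ((algebraMap F[X] (RatFunc F) p : RatFunc F) : LaurentSeries F) =
      HahnSeries.ofPowerSeries ℤ F p :=
  (coe_coe p).symm

theorem coeff_coe_div_eq_zero_of_neg {p q : F[X]} (hq : q.coeff 0 ≠ 0) {k : ℤ} (hk : k < 0) :
    ((algebraMap F[X] (RatFunc F) p / algebraMap F[X] (RatFunc F) q : RatFunc F) :
      LaurentSeries F).coeff k = 0 := by
  have hq0 : q ≠ 0 := by rintro rfl; exact hq (Polynomial.coeff_zero 0)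
  have hunit : (q : PowerSeries F) * (q : PowerSeries F)⁻¹ = 1 :=
    PowerSeries.mul_inv_cancel _ (by simpa using hq)
  have hexpand : ((algebraMap F[X] (RatFunc F) p / algebraMap F[X] (RatFunc F) q : RatFunc F) :
      LaurentSeries F) = HahnSeries.ofPowerSeries ℤ F (p * (q : PowerSeries F)⁻¹) := by
    rw [map_div₀, div_eq_iff, coe_algebraMap_polynomial, coe_algebraMap_polynomial, ← map_mul,
      mul_assoc, mul_comm _ (q : PowerSeries F), hunit, mul_one]
    exact (_root_.map_ne_zero _).2 (algebraMap_ne_zero hq0)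
  rw [hexpand, PowerSeries.coeff_coe, if_pos hk]

theorem coeff_coe_X_mul_C (c : F) {k : ℤ} (hk : k ≠ 1) :
    ((X * C c : RatFunc F) : LaurentSeries F).coeff k = 0 := by
  rw [map_mul, coe_X, ← algebraMap_C, coe_algebraMap_polynomial, Polynomial.coe_C,
    HahnSeries.ofPowerSeries_C, HahnSeries.C_apply, HahnSeries.single_mul_single,
    HahnSeries.coeff_single_of_ne (by rwa [add_zero])]

variable {R : Type*} [CommRing R] [Algebra R (RatFunc F)]
  {D : Derivation R (RatFunc F) (RatFunc F)}

theorem derivation_algebraMap_mem_range (hX : D X = 0)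
    (hC : ∀ c, D (C c) ∈ (C : F →+* RatFunc F).fieldRange) (g : F[X]) :
    D (algebraMap F[X] (RatFunc F) g) ∈ (algebraMap F[X] (RatFunc F)).range := by
  induction g using Polynomial.induction_on' with
  | add p q hp hq => rw [map_add, map_add]; exact add_mem hp hq
  | monomial n c =>
    obtain ⟨c', hc'⟩ := hC c
    refine ⟨monomial n c', ?_⟩
    simp only [← Polynomial.C_mul_X_pow_eq_monomial, map_mul, map_pow, algebraMap_C, algebraMap_X,
      D.leibniz, D.leibniz_pow, hX, smul_zero, smul_eq_mul, mul_zero, hc']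
    ring

theorem coeff_coe_derivation_div_algebraMap_eq_zero_of_neg (hX : D X = 0)
    (hC : ∀ c, D (C c) ∈ (C : F →+* RatFunc F).fieldRange) {g : F[X]} (hg : g ≠ 0) {k : ℤ}
    (hk : k < 0) :
    ((D (algebraMap F[X] (RatFunc F) g) / algebraMap F[X] (RatFunc F) g : RatFunc F) :
      LaurentSeries F).coeff k = 0 := by
  obtain ⟨h, hgh, hh⟩ := g.exists_eq_pow_rootMultiplicity_mul_and_not_dvd hg 0
  set n := g.rootMultiplicity 0
  rw [map_zero, sub_zero] at hgh hh
  rw [X_dvd_iff] at hh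
  obtain ⟨h', hh'⟩ := derivation_algebraMap_mem_range hX hC h
  rw [hgh, map_mul, D.leibniz, map_pow, algebraMap_X, D.leibniz_pow, hX, smul_zero, smul_zero,
    smul_zero, add_zero, smul_eq_mul, mul_div_mul_left _ _ (pow_ne_zero n X_ne_zero), ← hh']
  exact coeff_coe_div_eq_zero_of_neg hh hk

theorem coeff_coe_derivation_div_self_eq_zero_of_neg (hX : D X = 0)
    (hC : ∀ c, D (C c) ∈ (C : F →+* RatFunc F).fieldRange) {f : RatFunc F} (hf : f ≠ 0) {k : ℤ}
    (hk : k < 0) : ((D f / f : RatFunc F) : LaurentSeries F).coeff k = 0 := by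
  have hnum := num_ne_zero hf
  have hnum' : algebraMap F[X] (RatFunc F) f.num ≠ 0 := algebraMap_ne_zero hnum
  have hdenom' : algebraMap F[X] (RatFunc F) f.denom ≠ 0 := algebraMap_ne_zero (denom_ne_zero f)
  have hlog : D f / f = D (algebraMap F[X] (RatFunc F) f.num) / algebraMap F[X] (RatFunc F) f.num
      - D (algebraMap F[X] (RatFunc F) f.denom) / algebraMap F[X] (RatFunc F) f.denom := by
    conv_lhs => rw [← num_div_denom f]
    rw [D.leibniz_div, smul_eq_mul, smul_eq_mul, smul_eq_mul]
    field_simp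
  rw [hlog, map_sub, HahnSeries.coeff_sub,
    coeff_coe_derivation_div_algebraMap_eq_zero_of_neg hX hC hnum hk,
    coeff_coe_derivation_div_algebraMap_eq_zero_of_neg hX hC (denom_ne_zero f) hk, sub_zero]

theorem algebraMap_apply_eq_C {A : Type*} [CommSemiring A] [Algebra A F] (a : A) :
    algebraMap A (RatFunc F) a = C (algebraMap A F a) := by
  rw [algebraMap_apply, map_one, div_one, Polynomial.algebraMap_apply, algebraMap_C]

theorem derivation_C_mem_fieldRange {A : Type*} [CommRing A] [Algebra A F] [IsFractionRing A F]
    (hA : ∀ a : A, D (algebraMap A (RatFunc F) a) ∈ (C : F →+* RatFunc F).fieldRange) (c : F) :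
    D (C c) ∈ (C : F →+* RatFunc F).fieldRange := by
  obtain ⟨a, b, -, rfl⟩ := IsFractionRing.div_surjective (A := A) c
  have hmem : ∀ a : A, algebraMap A (RatFunc F) a ∈ (C : F →+* RatFunc F).fieldRange :=
    fun a => ⟨_, (algebraMap_apply_eq_C a).symm⟩
  rw [map_div₀, ← algebraMap_apply_eq_C, ← algebraMap_apply_eq_C, D.leibniz_div,
    smul_eq_mul, smul_eq_mul, smul_eq_mul]
  exact mul_mem (pow_mem (inv_mem (hmem b)) 2)
    (sub_mem (mul_mem (hmem b) (hA a)) (mul_mem (hmem a) (hA b)))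

end RatFunc

theorem trace_dlogForm_mem_fieldRange {K : Type*} [Field K] {M N m : ℕ}
    (L : Fin N → MvPolynomial (Fin M) K) (j : Fin M) (α : Fin N → Matrix (Fin m) (Fin m) K) :
    (∑ l, dlogTerm L j l • (α l).map (algebraMap K (FE K M))).trace ∈
      (RatFunc.C : FX K M →+* FE K M).fieldRange := by
  have hpoly : ∀ p : MvPolynomial (Fin M) K,
      algebraMap _ (FE K M) p ∈ (RatFunc.C : FX K M →+* FE K M).fieldRange :=
    fun p => ⟨_, (RatFunc.algebraMap_apply_eq_C p).symm⟩
  have hconst : ∀ c : K, algebraMap K (FE K M) c ∈ (RatFunc.C : FX K M →+* FE K M).fieldRange :=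
    fun c => ⟨_, (RatFunc.algebraMap_apply_eq_C c).symm⟩
  rw [Matrix.trace_sum]
  refine sum_mem fun l _ => ?_
  rw [Matrix.trace_smul, smul_eq_mul]
  exact mul_mem (div_mem (hpoly _) (hpoly _)) (sum_mem fun i _ => hconst (α l i i))

theorem trace_no_negative_orders_general
    {K : Type*} [Field K] {M N m : ℕ}
    -- the derivations `∂ j` of `F`, extending `∂/∂x_j` on the polynomial ring
    -- and annihilating the regulator
    (der : Fin M → Derivation K (FE K M) (FE K M))
    (hderEps : ∀ j, der j (eps K M) = 0)
    (hder : ∀ (j : Fin M) (p : MvPolynomial (Fin M) K),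
      der j (algebraMap (MvPolynomial (Fin M) K) (FE K M) p)
        = algebraMap (MvPolynomial (Fin M) K) (FE K M) (pderiv j p))
    -- the letters: pairwise non-associated irreducible polynomials in the invariants
    (L : Fin N → MvPolynomial (Fin M) K)
    (a : Fin M → Matrix (Fin m) (Fin m) (FE K M))
    (T : Matrix (Fin m) (Fin m) (FE K M)) (hT : IsUnit T.det)
    -- the constant coefficient matrices of the dlog-form Ã
    (α : Fin N → Matrix (Fin m) (Fin m) K)
    (heq : ∀ j, T⁻¹ * a j * T - T⁻¹ * T.map (der j)
      = eps K M • ∑ l, dlogTerm L j l • (α l).map (algebraMap K (FE K M))) :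
    ∀ (j : Fin M) (k : ℤ), k < 0 → coeffL (Matrix.trace (a j)) k = 0 := by
  intro j k hk
  obtain ⟨s, hs⟩ := trace_dlogForm_mem_fieldRange L j α
  have htrace : (a j).trace = eps K M * RatFunc.C s + der j T.det / T.det := by
    have h := congrArg Matrix.trace (heq j)
    rw [Matrix.trace_sub, Matrix.trace_mul_cycle, Matrix.mul_nonsing_inv T hT, one_mul,
      Matrix.trace_inv_mul_map_derivation, Matrix.trace_smul, ← hs, smul_eq_mul] at h
    exact sub_eq_iff_eq_add.mp h
  have hconst := RatFunc.derivation_C_mem_fieldRange (D := der j) (A := MvPolynomial (Fin M) K)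
    fun p => by rw [hder, RatFunc.algebraMap_apply_eq_C]; exact ⟨_, rfl⟩
  rw [coeffL, htrace, map_add, HahnSeries.coeff_add, eps, RatFunc.coeff_coe_X_mul_C s (by omega),
    RatFunc.coeff_coe_derivation_div_self_eq_zero_of_neg (hderEps j) hconst hT.ne_zero hk,
    add_zero]

/-- If an invertible rational transformation `T` brings `a` into the canonical form
`ε Ãⱼ = T⁻¹ aⱼ T - T⁻¹ ∂ⱼT` with `(Ãⱼ)` a dlog-form with constant coefficient matrices,
then the ε-Laurent expansion of `Tr aⱼ` has no negative orders. -/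
theorem trace_no_negative_orders
    {K : Type*} [Field K] [CharZero K] {M N m : ℕ}
    -- the derivations `∂ j` of `F`, extending `∂/∂x_j` on the polynomial ring
    -- and annihilating the regulator
    (der : Fin M → Derivation K (FE K M) (FE K M))
    (hderEps : ∀ j, der j (eps K M) = 0)
    (hder : ∀ (j : Fin M) (p : MvPolynomial (Fin M) K),
      der j (algebraMap (MvPolynomial (Fin M) K) (FE K M) p)
        = algebraMap (MvPolynomial (Fin M) K) (FE K M) (pderiv j p))
    -- the letters: pairwise non-associated irreducible polynomials in the invariants
    (L : Fin N → MvPolynomial (Fin M) K)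
    (hLirr : ∀ l, Irreducible (L l))
    (hLass : ∀ l l', l ≠ l' → ¬ Associated (L l) (L l'))
    (a : Fin M → Matrix (Fin m) (Fin m) (FE K M))
    (T : Matrix (Fin m) (Fin m) (FE K M)) (hT : IsUnit T.det)
    -- the constant coefficient matrices of the dlog-form Ã
    (α : Fin N → Matrix (Fin m) (Fin m) K)
    (heq : ∀ j, T⁻¹ * a j * T - T⁻¹ * T.map (der j)
      = eps K M • ∑ l, dlogTerm L j l • (α l).map (algebraMap K (FE K M))) :
    ∀ (j : Fin M) (k : ℤ), k < 0 → coeffL (Matrix.trace (a j)) k = 0 :=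
  trace_no_negative_orders_general der hderEps hder L a T hT α heq
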